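/- arXiv:1203.6308 — 2 statements merged into one kernel-verified Lean document; each statement's English description precedes it below -/
import Mathlib

section
/- Let G be a group with length function L. Suppose there exists a polynomial P such that for every r > 0 and every nonnegative finitely supported f: G → ℝ≥0 supported in {g : L(g) ≤ r}, ‖λ(f)‖ ≤ P(r)‖f‖₂. Then there exist constants C, s > 0 such that ‖λ(f)‖ ≤ C‖f‖_{s,L} for all finitely supported complex functions f on G. -/
open scoped BigOperators

/-- A length function on a group `G`. -/
def IsLengthFunction {G : Type*} [Group G] (L : G → ℝ) : Prop :=
  (∀ g, 0 ≤ L g) ∧ (∀ g h, L (g * h) ≤ L g + L h) ∧ (∀ g, L g⁻¹ = L g) ∧ L 1 = 0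

/-- The `ℓ²`-norm of a function (junk value `0` if not square-summable). -/
noncomputable def l2f {α : Type*} (φ : α → ℂ) : ℝ :=
  Real.sqrt (∑' x, ‖φ x‖ ^ 2)

/-- Convolution of a finitely supported function with an arbitrary function on `G`. -/
noncomputable def convG {G : Type*} [Group G] (f : G →₀ ℂ) (k : G → ℂ) : G → ℂ :=
  fun g => ∑ x ∈ f.support, f x * k (x⁻¹ * g)

/-- The operator norm of the left regular representation `λ(f)` on `ℓ²(G)`. -/
noncomputable def opNG {G : Type*} [Group G] (f : G →₀ ℂ) : ℝ :=
  sSup {c : ℝ | ∃ ξ : G →₀ ℂ, l2f ⇑ξ ≤ 1 ∧ c = l2f (convG f ⇑ξ)}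

/-- The weighted `ℓ²`-norm `‖f‖_{s,L}`. -/
noncomputable def wnormG {G : Type*} [Group G] (L : G → ℝ) (s : ℝ) (f : G →₀ ℂ) : ℝ :=
  Real.sqrt (∑ g ∈ f.support, ‖f g‖ ^ 2 * (1 + L g) ^ (2 * s))

/-- A complex-valued function is nonnegative real valued. -/
def NonnegFun {α : Type*} (f : α → ℂ) : Prop := ∀ x, ∃ t : ℝ, 0 ≤ t ∧ f x = t

/-! Pointwise `|λ(f)ξ| ≤ λ(|f|)|ξ|`, so `‖λ(f)‖ ≤ ‖λ(|f|)‖` and the hypothesis extends to all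
complex `f` supported in a ball. Cut `f` into the shells `f_n = f · 1[⌊L⌋ = n]`, supported in the
ball of radius `n + 1`. With `d = deg P` and `P(n + 1) ≤ C (n + 1)^d`,
`‖λ(f)‖ ≤ C Σ (n + 1)⁻¹ · (n + 1)^(d+1) ‖f_n‖₂`, and Cauchy–Schwarz against the convergent
`Σ (n + 1)⁻²` bounds this by a constant times `‖f‖_{d+1,L}`, since `n + 1 ≤ 1 + L` on the `n`-th
shell. -/

open Function
open scoped Pointwise

section L2

variable {α : Type*}

lemma l2f_nonneg (φ : α → ℂ) : 0 ≤ l2f φ := Real.sqrt_nonneg _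

lemma l2f_eq_sqrt_sum {φ : α → ℂ} {S : Finset α} (h : support φ ⊆ S) :
    l2f φ = √(∑ x ∈ S, ‖φ x‖ ^ 2) := by
  rw [l2f]
  congr 1
  exact tsum_eq_sum' ((support_comp_subset (f := φ) (g := fun z => ‖z‖ ^ 2) (by simp)).trans h)

lemma l2f_le_of_norm_le {φ ψ : α → ℂ} {S : Finset α} (hψ : support ψ ⊆ S)
    (h : ∀ x, ‖φ x‖ ≤ ‖ψ x‖) : l2f φ ≤ l2f ψ := by
  have hφ : support φ ⊆ S := fun x hx => hψ fun h0 =>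
    hx (norm_le_zero_iff.mp ((h x).trans_eq (by simp [h0])))
  rw [l2f_eq_sqrt_sum hφ, l2f_eq_sqrt_sum hψ]
  gcongr with x
  exact h x

lemma l2f_const_mul (c : ℂ) (φ : α → ℂ) : l2f (fun x => c * φ x) = ‖c‖ * l2f φ := by
  simp only [l2f, norm_mul, mul_pow, tsum_mul_left, Real.sqrt_mul (sq_nonneg _),
    Real.sqrt_sq (norm_nonneg _)]

lemma l2f_comp_equiv {β : Type*} (e : α ≃ β) (φ : β → ℂ) : l2f (φ ∘ e) = l2f φ :=
  congrArg Real.sqrt (e.tsum_eq fun y => ‖φ y‖ ^ 2)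

noncomputable def restrictL2 (S : Finset α) : (α → ℂ) →ₗ[ℂ] EuclideanSpace ℂ S :=
  (WithLp.linearEquiv 2 ℂ (S → ℂ)).symm.toLinearMap ∘ₗ LinearMap.funLeft ℂ ℂ Subtype.val

lemma l2f_eq_norm_restrictL2 {φ : α → ℂ} {S : Finset α} (h : support φ ⊆ S) :
    l2f φ = ‖restrictL2 S φ‖ := by
  rw [l2f_eq_sqrt_sum h, EuclideanSpace.norm_eq, ← Finset.sum_coe_sort S]
  rfl

lemma l2f_sum_le {ι : Type*} {S : Finset α} (t : Finset ι) {F : ι → α → ℂ}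
    (hF : ∀ i ∈ t, support (F i) ⊆ S) :
    l2f (fun x => ∑ i ∈ t, F i x) ≤ ∑ i ∈ t, l2f (F i) := by
  have hsum : support (fun x => ∑ i ∈ t, F i x) ⊆ S :=
    (Finset.support_sum t F).trans (Set.iUnion₂_subset hF)
  have hlin : restrictL2 S (fun x => ∑ i ∈ t, F i x) = ∑ i ∈ t, restrictL2 S (F i) := by
    rw [← map_sum]
    congr 1
    ext x
    simp
  rw [l2f_eq_norm_restrictL2 hsum, hlin]
  exact (norm_sum_le _ _).trans_eq
    (Finset.sum_congr rfl fun i hi => (l2f_eq_norm_restrictL2 (hF i hi)).symm)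

end L2

section Convolution

variable {G : Type*} [Group G]

lemma convG_finsetSum {ι : Type*} (t : Finset ι) (F : ι → G →₀ ℂ) (k : G → ℂ) :
    convG (∑ i ∈ t, F i) k = fun g => ∑ i ∈ t, convG (F i) k g :=
  funext fun g => (Finsupp.sum_finsetSum_index (h := fun x a => a * k (x⁻¹ * g)) (by simp)
    (fun _ _ _ => add_mul _ _ _)).symm

variable [DecidableEq G]

lemma mem_support_mul_of_apply_ne_zero {f ξ : G →₀ ℂ} {x g : G} (hx : x ∈ f.support)
    (hg : ξ (x⁻¹ * g) ≠ 0) : g ∈ (↑(f.support * ξ.support) : Set G) := by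
  rw [Finset.mem_coe]
  simpa using Finset.mul_mem_mul hx (Finsupp.mem_support_iff.mpr hg)

lemma support_convG_subset (f ξ : G →₀ ℂ) : support (convG f ξ) ⊆ ↑(f.support * ξ.support) := by
  intro g hg
  obtain ⟨x, hx, hxg⟩ := Finset.exists_ne_zero_of_sum_ne_zero hg
  exact mem_support_mul_of_apply_ne_zero hx (right_ne_zero_of_mul hxg)

lemma l2f_convG_le (f ξ : G →₀ ℂ) : l2f (convG f ξ) ≤ (∑ x ∈ f.support, ‖f x‖) * l2f ξ := by
  refine (l2f_sum_le _ fun x hx g hg =>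
    mem_support_mul_of_apply_ne_zero hx (right_ne_zero_of_mul hg)).trans_eq ?_
  rw [Finset.sum_mul]
  refine Finset.sum_congr rfl fun x _ => ?_
  rw [l2f_const_mul]
  exact congrArg _ (l2f_comp_equiv (Equiv.mulLeft x⁻¹) ξ)

end Convolution

section OperatorNorm

variable {G : Type*} [Group G]

lemma bddAbove_opNG_set [DecidableEq G] (f : G →₀ ℂ) :
    BddAbove {c : ℝ | ∃ ξ : G →₀ ℂ, l2f ⇑ξ ≤ 1 ∧ c = l2f (convG f ⇑ξ)} := by
  refine ⟨∑ x ∈ f.support, ‖f x‖, ?_⟩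
  rintro c ⟨ξ, hξ, rfl⟩
  calc l2f (convG f ξ) ≤ (∑ x ∈ f.support, ‖f x‖) * l2f ξ := l2f_convG_le f ξ
    _ ≤ ∑ x ∈ f.support, ‖f x‖ := mul_le_of_le_one_right (by positivity) hξ

lemma opNG_le {f : G →₀ ℂ} {M : ℝ} (h : ∀ ξ : G →₀ ℂ, l2f ξ ≤ 1 → l2f (convG f ξ) ≤ M) :
    opNG f ≤ M :=
  csSup_le ⟨_, 0, by simp [l2f], rfl⟩ (by rintro c ⟨ξ, hξ, rfl⟩; exact h ξ hξ)

lemma l2f_convG_le_opNG (f : G →₀ ℂ) {ξ : G →₀ ℂ} (hξ : l2f ξ ≤ 1) :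
    l2f (convG f ξ) ≤ opNG f := by
  classical
  exact le_csSup (bddAbove_opNG_set f) ⟨ξ, hξ, rfl⟩

lemma opNG_finsetSum_le {ι : Type*} (t : Finset ι) (F : ι → G →₀ ℂ) :
    opNG (∑ i ∈ t, F i) ≤ ∑ i ∈ t, opNG (F i) := by
  classical
  refine opNG_le fun ξ hξ => ?_
  have hsupp : ∀ i ∈ t,
      support (convG (F i) ξ) ⊆ ↑((t.biUnion fun i => (F i).support) * ξ.support) :=
    fun i hi => (support_convG_subset _ _).trans <| Finset.coe_subset.mpr <|
      Finset.mul_subset_mul_right (Finset.subset_biUnion_of_mem (fun i => (F i).support) hi)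
  rw [convG_finsetSum]
  exact (l2f_sum_le t hsupp).trans (Finset.sum_le_sum fun i _ => l2f_convG_le_opNG _ hξ)

end OperatorNorm

section Abs

variable {α : Type*}

noncomputable def absFinsupp (f : α →₀ ℂ) : α →₀ ℂ := f.mapRange (fun z => (‖z‖ : ℂ)) (by simp)

lemma absFinsupp_apply (f : α →₀ ℂ) (x : α) : absFinsupp f x = ‖f x‖ := Finsupp.mapRange_apply

lemma support_absFinsupp (f : α →₀ ℂ) : (absFinsupp f).support = f.support := by
  ext x
  simp [absFinsupp_apply]

lemma nonnegFun_absFinsupp (f : α →₀ ℂ) : NonnegFun (absFinsupp f) :=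
  fun x => ⟨‖f x‖, norm_nonneg _, absFinsupp_apply f x⟩

lemma l2f_absFinsupp (f : α →₀ ℂ) : l2f (absFinsupp f) = l2f f := by
  simp [l2f, absFinsupp_apply]

variable {G : Type*} [Group G]

lemma norm_convG_le_convG_absFinsupp (f ξ : G →₀ ℂ) (g : G) :
    ‖convG f ξ g‖ ≤ ‖convG (absFinsupp f) (absFinsupp ξ) g‖ := by
  have habs : convG (absFinsupp f) (absFinsupp ξ) g
      = ((∑ x ∈ f.support, ‖f x‖ * ‖ξ (x⁻¹ * g)‖ : ℝ) : ℂ) := by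
    simp [convG, support_absFinsupp, absFinsupp_apply]
  rw [habs, Complex.norm_real, Real.norm_of_nonneg (by positivity)]
  exact (norm_sum_le _ _).trans_eq (Finset.sum_congr rfl fun x _ => norm_mul _ _)

lemma opNG_le_opNG_absFinsupp (f : G →₀ ℂ) : opNG f ≤ opNG (absFinsupp f) := by
  classical
  refine opNG_le fun ξ hξ => ?_
  have hsupp := support_convG_subset (absFinsupp f) (absFinsupp ξ)
  calc l2f (convG f ξ) ≤ l2f (convG (absFinsupp f) (absFinsupp ξ)) :=
        l2f_le_of_norm_le hsupp (norm_convG_le_convG_absFinsupp f ξ)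
    _ ≤ opNG (absFinsupp f) := l2f_convG_le_opNG _ (by rwa [l2f_absFinsupp])

end Abs

section Shells

variable {α : Type*} (L : α → ℝ)

noncomputable def shell (f : α →₀ ℂ) (n : ℕ) : α →₀ ℂ := f.filter fun g => ⌊L g⌋₊ = n

lemma support_shell (f : α →₀ ℂ) (n : ℕ) :
    (shell L f n).support = {g ∈ f.support | ⌊L g⌋₊ = n} :=
  Finsupp.support_filter _ f

lemma sum_shell (f : α →₀ ℂ) : ∑ n ∈ f.support.image (⌊L ·⌋₊), shell L f n = f := by
  ext g
  simp only [shell, Finsupp.finsetSum_apply, Finsupp.filter_apply, Finset.sum_ite_eq]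
  by_cases hg : g ∈ f.support
  · simp [Finset.mem_image_of_mem _ hg]
  · simp [Finsupp.notMem_support_iff.mp hg]

lemma le_of_mem_support_shell {f : α →₀ ℂ} {n : ℕ} {g : α} (hg : g ∈ (shell L f n).support) :
    L g ≤ n + 1 := by
  rw [support_shell, Finset.mem_filter] at hg
  exact hg.2 ▸ (Nat.lt_floor_add_one (L g)).le

lemma sq_l2f_shell (f : α →₀ ℂ) (n : ℕ) :
    l2f (shell L f n) ^ 2 = ∑ g ∈ f.support with ⌊L g⌋₊ = n, ‖f g‖ ^ 2 := by
  rw [l2f_eq_sqrt_sum (Finsupp.fun_support_eq _).subset,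
    Real.sq_sqrt (by positivity), support_shell]
  refine Finset.sum_congr rfl fun g hg => ?_
  rw [shell, Finsupp.filter_apply, if_pos (Finset.mem_filter.mp hg).2]

end Shells

lemma sqrt_sum_sq_mul_l2f_shell_le {G : Type*} [Group G] {L : G → ℝ} (hL : ∀ g, 0 ≤ L g)
    (k : ℕ) (f : G →₀ ℂ) :
    √(∑ n ∈ f.support.image (⌊L ·⌋₊), (((n : ℝ) + 1) ^ k * l2f (shell L f n)) ^ 2)
      ≤ wnormG L k f := by
  have hexp : (2 : ℝ) * k = ((2 * k : ℕ) : ℝ) := by push_cast; ring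
  simp only [wnormG, hexp, Real.rpow_natCast]
  refine Real.sqrt_le_sqrt ?_
  calc ∑ n ∈ f.support.image (⌊L ·⌋₊), (((n : ℝ) + 1) ^ k * l2f (shell L f n)) ^ 2
      = ∑ n ∈ f.support.image (⌊L ·⌋₊), ∑ g ∈ f.support with ⌊L g⌋₊ = n,
          ‖f g‖ ^ 2 * ((n : ℝ) + 1) ^ (2 * k) := by
        simp only [mul_pow, sq_l2f_shell, Finset.mul_sum, ← pow_mul, mul_comm 2 k, mul_comm]
    _ ≤ ∑ n ∈ f.support.image (⌊L ·⌋₊), ∑ g ∈ f.support with ⌊L g⌋₊ = n,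
          ‖f g‖ ^ 2 * (1 + L g) ^ (2 * k) := by
        refine Finset.sum_le_sum fun n _ => Finset.sum_le_sum fun g hg => ?_
        have hn : (n : ℝ) ≤ L g := (Finset.mem_filter.mp hg).2 ▸ Nat.floor_le (hL g)
        gcongr ‖f g‖ ^ 2 * ?_ ^ _
        linarith
    _ = ∑ g ∈ f.support, ‖f g‖ ^ 2 * (1 + L g) ^ (2 * k) :=
        Finset.sum_fiberwise_of_maps_to (fun g hg => Finset.mem_image_of_mem _ hg) _


lemma Polynomial.exists_eval_le_mul_pow_natDegree (P : Polynomial ℝ) :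
    ∃ C : ℝ, 0 < C ∧ ∀ r : ℝ, 1 ≤ r → P.eval r ≤ C * r ^ P.natDegree := by
  refine ⟨∑ i ∈ Finset.range (P.natDegree + 1), |P.coeff i| + 1, by positivity, fun r hr => ?_⟩
  rw [P.eval_eq_sum_range, add_mul, one_mul, Finset.sum_mul]
  refine le_add_of_le_of_nonneg (Finset.sum_le_sum fun i hi => ?_) (by positivity)
  have hri : r ^ i ≤ r ^ P.natDegree := pow_le_pow_right₀ hr (Finset.mem_range_succ_iff.mp hi)
  calc P.coeff i * r ^ i ≤ |P.coeff i| * r ^ i := by gcongr; exact le_abs_self _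
    _ ≤ |P.coeff i| * r ^ P.natDegree := by gcongr

lemma summable_inv_succ_sq : Summable fun n : ℕ => ((n : ℝ) + 1)⁻¹ ^ 2 := by
  simpa [inv_pow] using (summable_nat_add_iff 1).mpr (Real.summable_nat_pow_inv.mpr one_lt_two)

lemma opNG_le_of_opNG_shell_le {G : Type*} [Group G] {L : G → ℝ} (hL : ∀ g, 0 ≤ L g)
    {C : ℝ} (hC : 0 ≤ C) (d : ℕ) (f : G →₀ ℂ)
    (h : ∀ n : ℕ, opNG (shell L f n) ≤ C * ((n : ℝ) + 1) ^ d * l2f (shell L f n)) :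
    opNG f ≤ C * √(∑' n : ℕ, ((n : ℝ) + 1)⁻¹ ^ 2) * wnormG L (d + 1 : ℕ) f := by
  set I := f.support.image (⌊L ·⌋₊)
  calc opNG f = opNG (∑ n ∈ I, shell L f n) := by rw [sum_shell]
    _ ≤ ∑ n ∈ I, opNG (shell L f n) := opNG_finsetSum_le I _
    _ ≤ ∑ n ∈ I, C * (((n : ℝ) + 1)⁻¹ * (((n : ℝ) + 1) ^ (d + 1) * l2f (shell L f n))) := by
        refine Finset.sum_le_sum fun n _ => (h n).trans_eq ?_
        field_simp
        ring
    _ = C * ∑ n ∈ I, ((n : ℝ) + 1)⁻¹ * (((n : ℝ) + 1) ^ (d + 1) * l2f (shell L f n)) :=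
        (Finset.mul_sum _ _ _).symm
    _ ≤ C * (√(∑ n ∈ I, ((n : ℝ) + 1)⁻¹ ^ 2) *
          √(∑ n ∈ I, (((n : ℝ) + 1) ^ (d + 1) * l2f (shell L f n)) ^ 2)) := by
        gcongr
        exact Real.sum_mul_le_sqrt_mul_sqrt _ _ _
    _ ≤ C * (√(∑' n : ℕ, ((n : ℝ) + 1)⁻¹ ^ 2) * wnormG L (d + 1 : ℕ) f) := by
        gcongr
        · exact summable_inv_succ_sq.sum_le_tsum I fun _ _ => by positivity
        · exact sqrt_sum_sq_mul_l2f_shell_le hL (d + 1) f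
    _ = C * √(∑' n : ℕ, ((n : ℝ) + 1)⁻¹ ^ 2) * wnormG L (d + 1 : ℕ) f := (mul_assoc _ _ _).symm

/-- a polynomial bound `‖λ(f)‖ ≤ P(r) ‖f‖₂` for nonnegative `f`
supported in balls implies the Haagerup inequality for all finitely supported `f`. -/
theorem stmt4 {G : Type*} [Group G] (L : G → ℝ) (hL : IsLengthFunction L)
    (P : Polynomial ℝ)
    (hyp : ∀ r : ℝ, 0 < r → ∀ f : G →₀ ℂ, NonnegFun ⇑f →
      (∀ g ∈ f.support, L g ≤ r) → opNG f ≤ P.eval r * l2f ⇑f) :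
    ∃ C : ℝ, 0 < C ∧ ∃ s : ℝ, 0 < s ∧
      ∀ f : G →₀ ℂ, opNG f ≤ C * wnormG L s f := by
  obtain ⟨C, hC, hP⟩ := P.exists_eval_le_mul_pow_natDegree
  have hσ : 0 < ∑' n : ℕ, ((n : ℝ) + 1)⁻¹ ^ 2 :=
    summable_inv_succ_sq.tsum_pos (fun _ => by positivity) 0 (by norm_num)
  refine ⟨C * √(∑' n : ℕ, ((n : ℝ) + 1)⁻¹ ^ 2), by positivity, (P.natDegree + 1 : ℕ),
    by positivity, fun f => opNG_le_of_opNG_shell_le hL.1 hC.le _ f fun n => ?_⟩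
  have hball : ∀ g ∈ (absFinsupp (shell L f n)).support, L g ≤ n + 1 := fun g hg =>
    le_of_mem_support_shell L (by rwa [support_absFinsupp] at hg)
  calc opNG (shell L f n) ≤ opNG (absFinsupp (shell L f n)) := opNG_le_opNG_absFinsupp _
    _ ≤ P.eval ((n : ℝ) + 1) * l2f (shell L f n) := by
        simpa only [l2f_absFinsupp] using
          hyp (n + 1) (by positivity) _ (nonnegFun_absFinsupp _) hball
    _ ≤ C * ((n : ℝ) + 1) ^ P.natDegree * l2f (shell L f n) := by
        gcongr
        · exact l2f_nonneg _
        · exact hP _ (by simp)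
end

section
/- Let A be a Banach algebra with unit and let 𝒜 be a dense unital subalgebra of A. Suppose there exists 0 < δ < 1 such that for every a ∈ 𝒜 with ‖a‖ < δ, the sum of the series Σ_{n≥1} aⁿ (which converges in A) belongs to 𝒜. Then 𝒜 is spectrally invariant in A: every element x ∈ 𝒜 that is invertible in A is invertible in 𝒜. -/
/-!
Approximate `x⁻¹` by some `b ∈ 𝒜` so closely that `a := 1 - x b` has norm `< δ`. The Neumann
series then shows `(1 - a)⁻¹ = 1 + ∑_{n ≥ 1} aⁿ`, which lies in `𝒜` by hypothesis, so
`y := b (1 + ∑_{n ≥ 1} aⁿ) ∈ 𝒜` satisfies `x y = 1`; since `x` is a unit, `y = x⁻¹`.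
-/

section NormedRing

variable {A : Type*} [NormedRing A]

theorem IsUnit.exists_mem_norm_one_sub_mul_lt {s : Set A} (hs : Dense s) {x : A} (hx : IsUnit x)
    {ε : ℝ} (hε : 0 < ε) : ∃ b ∈ s, ‖1 - x * b‖ < ε := by
  obtain ⟨u, rfl⟩ := hx
  have hopen : IsOpen {b : A | ‖1 - u * b‖ < ε} :=
    isOpen_lt (by fun_prop) continuous_const
  have hinv : (↑u⁻¹ : A) ∈ {b : A | ‖1 - u * b‖ < ε} := by
    simpa only [Set.mem_ofPred_eq, Units.mul_inv, sub_self, norm_zero] using hε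
  exact hs.exists_mem_open hopen ⟨_, hinv⟩

theorem one_sub_mul_one_add_tsum_pow_succ [CompleteSpace A] {a : A} (ha : ‖a‖ < 1) :
    (1 - a) * (1 + ∑' n : ℕ, a ^ (n + 1)) = 1 := by
  have hgeom : ∑' n : ℕ, a ^ n = 1 + ∑' n : ℕ, a ^ (n + 1) := by
    rw [(summable_geometric_of_norm_lt_one ha).tsum_eq_zero_add, pow_zero]
  rw [← hgeom, mul_neg_geom_series a ha]

theorem exists_mem_mul_eq_one_of_tsum_pow_succ_mem [CompleteSpace A] {S : Type*} [SetLike S A]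
    [SubringClass S A] {s : S} (hdense : Dense (s : Set A)) {δ : ℝ} (hδ0 : 0 < δ) (hδ1 : δ < 1)
    (hser : ∀ a ∈ s, ‖a‖ < δ → (∑' n : ℕ, a ^ (n + 1)) ∈ s) {x : A} (hx : x ∈ s)
    (hxu : IsUnit x) : ∃ y ∈ s, x * y = 1 := by
  obtain ⟨b, hbs, hb⟩ := hxu.exists_mem_norm_one_sub_mul_lt hdense hδ0
  set a := 1 - x * b with ha
  have has : a ∈ s := sub_mem (one_mem s) (mul_mem hx hbs)
  have hxb : x * b = 1 - a := by rw [ha, sub_sub_cancel]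
  refine ⟨b * (1 + ∑' n : ℕ, a ^ (n + 1)), mul_mem hbs (add_mem (one_mem s) (hser a has hb)), ?_⟩
  rw [← mul_assoc, hxb, one_sub_mul_one_add_tsum_pow_succ (hb.trans hδ1)]

end NormedRing

theorem IsUnit.mul_eq_one_symm {M : Type*} [Monoid M] {x y : M} (hx : IsUnit x)
    (hxy : x * y = 1) : y * x = 1 := by
  obtain ⟨u, rfl⟩ := hx
  rw [← Units.mul_eq_one_iff_inv_eq.mp hxy, Units.inv_mul]

/-- a dense unital subalgebra `𝒜` of a unital Banach algebra `A` that
contains the sums of Neumann series `∑_{n ≥ 1} aⁿ` of all its elements of norm `< δ`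
(for some fixed `0 < δ < 1`) is spectrally invariant in `A`. -/
theorem stmt13 {A : Type*} [NormedRing A] [NormedAlgebra ℂ A] [CompleteSpace A]
    (𝒜 : Subalgebra ℂ A) (hdense : Dense (𝒜 : Set A))
    (δ : ℝ) (hδ0 : 0 < δ) (hδ1 : δ < 1)
    (hser : ∀ a ∈ 𝒜, ‖a‖ < δ → (∑' n : ℕ, a ^ (n + 1)) ∈ 𝒜) :
    ∀ x ∈ 𝒜, IsUnit x → ∃ y ∈ 𝒜, x * y = 1 ∧ y * x = 1 := by
  intro x hx hxu
  obtain ⟨y, hy, hxy⟩ :=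
    exists_mem_mul_eq_one_of_tsum_pow_succ_mem hdense hδ0 hδ1 hser hx hxu
  exact ⟨y, hy, hxy, hxu.mul_eq_one_symm hxy⟩
end
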